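/- For every n ≥ 1 one has δ(L_1[0,1]|W_n, W_n) = L_n, where L_n = ∫_0^1 |D_n(t)| dt is the n-th Lebesgue constant of the Walsh system. -/

import Mathlib

open MeasureTheory
open scoped ENNReal

noncomputable section

/-- The Rademacher function `r_{i+1}` of the paper: `r_1(t) = 1` on `[0,1/2) + ℤ`,
`-1` on `[1/2,1) + ℤ`, and `r_{i+1}(t) = r_1(2^i t)`. -/
def rademacher (i : ℕ) (t : ℝ) : ℝ :=
  if Int.fract (2 ^ i * t) < 1 / 2 then 1 else -1

/-- The `n`-th Walsh function `w_n = ∏_i r_{i+1}^{n_i}` where `n = ∑_i n_i 2^i`. -/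
def walsh (n : ℕ) (t : ℝ) : ℝ :=
  ∏ i ∈ Finset.range n, if n.testBit i then rademacher i t else 1

/-- Lebesgue measure on `[0,1]`. -/
def unitI : Measure ℝ := volume.restrict (Set.Icc 0 1)

/-- `f ∈ L_2^X`: `f : [0,1] → X` is (Bochner) measurable with `∫_0^1 ‖f(t)‖² dt < ∞`. -/
def MemL2 {X : Type*} [NormedAddCommGroup X] (f : ℝ → X) : Prop := MemLp f 2 unitI

/-- `‖f‖_2 = (∫_0^1 ‖f(t)‖² dt)^{1/2}`. -/
def l2norm {X : Type*} [NormedAddCommGroup X] (f : ℝ → X) : ℝ :=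
  Real.sqrt (∫ t, ‖f t‖ ^ 2 ∂unitI)

/-- The Walsh–Fourier coefficient `⟨f, w_i⟩ = ∫_0^1 f(t) w_i(t) dt`. -/
def walshCoeff {X : Type*} [NormedAddCommGroup X] [NormedSpace ℝ X] (f : ℝ → X) (i : ℕ) : X :=
  ∫ t, walsh i t • f t ∂unitI

/-- The `n`-th Walsh partial sum `S_n(f) = ∑_{i<n} ⟨f,w_i⟩ w_i`. -/
def walshSum {X : Type*} [NormedAddCommGroup X] [NormedSpace ℝ X] (n : ℕ) (f : ℝ → X) :
    ℝ → X :=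
  fun t => ∑ i ∈ Finset.range n, walsh i t • walshCoeff f i

/-- The ideal norm `δ(T | W_n, W_n)`: the least `c ≥ 0` with
`‖T ∘ S_n(f)‖_2 ≤ c ‖f‖_2` for all `f ∈ L_2^X`. -/
def walshDelta {X Y : Type*} [NormedAddCommGroup X] [NormedSpace ℝ X]
    [NormedAddCommGroup Y] [NormedSpace ℝ Y] (T : X →L[ℝ] Y) (n : ℕ) : ℝ :=
  sInf {c : ℝ | 0 ≤ c ∧ ∀ f : ℝ → X, MemL2 f →
    l2norm (fun t => T (walshSum n f t)) ≤ c * l2norm f}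

/-- The `n`-th Walsh–Dirichlet kernel `D_n = ∑_{i<n} w_i`. -/
def dirichlet (n : ℕ) (t : ℝ) : ℝ := ∑ i ∈ Finset.range n, walsh i t

/-- The `n`-th Lebesgue constant `L_n = ∫_0^1 |D_n(t)| dt` of the Walsh system. -/
def lebesgueConst (n : ℕ) : ℝ := ∫ t, |dirichlet n t| ∂unitI

/-!
For `n ≤ 2 ^ k` the Walsh functions `w_i`, `i < n`, are constant on the dyadic intervals
`J(k, a) = [a / 2^k, (a + 1) / 2^k)`, and `w_i(t) w_i(s)` depends only on `a ⊕ b` (bitwise xor)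
for `t ∈ J(k, a)`, `s ∈ J(k, b)`. Hence `S_n f` is constant on `J(k, a)` with value
`∑_b D_n(a ⊕ b) ∫_{J(k, b)} f`: a convolution on the group `(ℤ/2)^k`. Young's inequality for this
convolution and Cauchy–Schwarz on each `J(k, b)` give `‖S_n f‖₂ ≤ L_n ‖f‖₂` in every Banach space.
In `X = L_1` the bound is attained: the function equal to `2^k 𝟙_{J(k, a)}` on `J(k, a)` has
`L_2^X`-norm one, and `S_n` maps it to the function equal to `∑_b D_n(a ⊕ b) 𝟙_{J(k, b)}` on
`J(k, a)`, whose `L_1`-norm is `2^{-k} ∑_c |D_n(c)| = L_n` for every `a`.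
-/

open Finset

def dyadicInterval (k a : ℕ) : Set ℝ := Set.Ico ((a : ℝ) / 2 ^ k) ((a + 1) / 2 ^ k)

lemma mem_dyadicInterval {k a : ℕ} {t : ℝ} :
    t ∈ dyadicInterval k a ↔ 0 ≤ t ∧ ⌊2 ^ k * t⌋₊ = a := by
  have hk : (0 : ℝ) < 2 ^ k := by positivity
  rw [dyadicInterval, Set.mem_Ico, div_le_iff₀' hk, lt_div_iff₀' hk]
  constructor
  · rintro ⟨h₁, h₂⟩
    have ht : 0 ≤ 2 ^ k * t := (Nat.cast_nonneg a).trans h₁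
    exact ⟨nonneg_of_mul_nonneg_right ht hk, (Nat.floor_eq_iff ht).2 ⟨h₁, h₂⟩⟩
  · rintro ⟨ht, rfl⟩
    exact ⟨Nat.floor_le (by positivity), Nat.lt_floor_add_one _⟩

lemma disjoint_dyadicInterval {k a b : ℕ} (hab : a ≠ b) :
    Disjoint (dyadicInterval k a) (dyadicInterval k b) :=
  Set.disjoint_left.2 fun _ hta htb =>
    hab ((mem_dyadicInterval.1 hta).2.symm.trans (mem_dyadicInterval.1 htb).2)

lemma biUnion_dyadicInterval (k : ℕ) :
    ⋃ a ∈ range (2 ^ k), dyadicInterval k a = Set.Ico (0 : ℝ) 1 := by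
  ext t
  simp only [Set.mem_iUnion, mem_range, mem_dyadicInterval, Set.mem_Ico, exists_prop]
  have hk : (0 : ℝ) < 2 ^ k := by positivity
  constructor
  · rintro ⟨a, ha, ht, rfl⟩
    refine ⟨ht, (mul_lt_iff_lt_one_right hk).1 ?_⟩
    exact_mod_cast (Nat.floor_lt (by positivity)).1 ha
  · rintro ⟨ht₀, ht₁⟩
    refine ⟨_, (Nat.floor_lt (by positivity)).2 ?_, ht₀, rfl⟩
    exact_mod_cast mul_lt_of_lt_one_right hk ht₁

lemma volume_dyadicInterval (k a : ℕ) :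
    volume (dyadicInterval k a) = ENNReal.ofReal (2 ^ k)⁻¹ := by
  rw [dyadicInterval, Real.volume_Ico]
  congr 1
  field_simp
  ring

lemma measurableSet_dyadicInterval (k a : ℕ) : MeasurableSet (dyadicInterval k a) :=
  measurableSet_Ico

instance : IsFiniteMeasure unitI := by
  rw [unitI]; infer_instance

lemma dyadicInterval_subset_Icc {k a : ℕ} (ha : a < 2 ^ k) :
    dyadicInterval k a ⊆ Set.Icc 0 1 := by
  refine subset_trans ?_ Set.Ico_subset_Icc_self
  rw [← biUnion_dyadicInterval k]
  exact Set.subset_biUnion_of_mem (u := dyadicInterval k) (mem_range.2 ha)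

lemma measureReal_dyadicInterval (k a : ℕ) : volume.real (dyadicInterval k a) = (2 ^ k)⁻¹ := by
  rw [measureReal_def, volume_dyadicInterval, ENNReal.toReal_ofReal (by positivity)]

lemma unitI_dyadicInterval {k a : ℕ} (ha : a < 2 ^ k) :
    unitI.real (dyadicInterval k a) = (2 ^ k)⁻¹ := by
  rw [unitI, measureReal_restrict_apply (measurableSet_dyadicInterval k a),
    Set.inter_eq_left.2 (dyadicInterval_subset_Icc ha), measureReal_dyadicInterval]

lemma integrableOn_dyadicInterval {E : Type*} [NormedAddCommGroup E] {f : ℝ → E}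
    (hf : Integrable f unitI) {k a : ℕ} (ha : a < 2 ^ k) : IntegrableOn f (dyadicInterval k a) :=
  IntegrableOn.mono_set hf (dyadicInterval_subset_Icc ha)

lemma integral_unitI_eq_sum {E : Type*} [NormedAddCommGroup E] [NormedSpace ℝ E] (k : ℕ)
    {f : ℝ → E} (hf : ∀ b < 2 ^ k, IntegrableOn f (dyadicInterval k b)) :
    ∫ t, f t ∂unitI = ∑ b ∈ range (2 ^ k), ∫ t in dyadicInterval k b, f t := by
  rw [unitI, integral_Icc_eq_integral_Ico, ← biUnion_dyadicInterval k,
    integral_biUnion_finset _ (fun b _ => measurableSet_dyadicInterval k b)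
      (fun a _ b _ hab => disjoint_dyadicInterval hab) fun b hb => hf b (mem_range.1 hb)]

lemma integral_unitI_of_eqOn_dyadicInterval (k : ℕ) {f : ℝ → ℝ} {c : ℕ → ℝ}
    (hc : ∀ b < 2 ^ k, Set.EqOn f (fun _ => c b) (dyadicInterval k b)) :
    ∫ t, f t ∂unitI = (∑ b ∈ range (2 ^ k), c b) / 2 ^ k := by
  have hint : ∀ b < 2 ^ k, IntegrableOn f (dyadicInterval k b) := fun b hb =>
    (integrableOn_const (by simp [volume_dyadicInterval])).congr_fun (hc b hb).symm
      (measurableSet_dyadicInterval k b)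
  rw [integral_unitI_eq_sum k hint, sum_div]
  refine sum_congr rfl fun b hb => ?_
  rw [setIntegral_congr_fun (measurableSet_dyadicInterval k b) (hc b (mem_range.1 hb)),
    setIntegral_const, measureReal_dyadicInterval, smul_eq_mul, inv_mul_eq_div]

lemma sum_indicator_dyadicInterval_of_mem {M : Type*} [AddCommMonoid M] (g : ℕ → M) {k a : ℕ}
    (ha : a < 2 ^ k) {t : ℝ} (ht : t ∈ dyadicInterval k a) :
    ∑ b ∈ range (2 ^ k), (dyadicInterval k b).indicator (fun _ => g b) t = g a := by
  rw [sum_eq_single_of_mem a (mem_range.2 ha), Set.indicator_of_mem ht]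
  exact fun b _ hba => Set.indicator_of_notMem
    (Set.disjoint_left.1 (disjoint_dyadicInterval hba.symm) ht) _

lemma fract_lt_half_iff {y : ℝ} (hy : 0 ≤ y) : Int.fract y < 1 / 2 ↔ ⌊2 * y⌋₊ % 2 = 0 := by
  have hfloor : ⌊y⌋₊ = ⌊2 * y⌋₊ / 2 := by
    rw [← Nat.floor_div_natCast]; norm_num
  have key : ⌊2 * y⌋₊ < 2 * (⌊2 * y⌋₊ / 2) + 1 ↔ 2 * y < 2 * ((⌊2 * y⌋₊ / 2 : ℕ) : ℝ) + 1 := by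
    rw [Nat.floor_lt (by positivity)]; push_cast [Nat.cast_ofNat]; rfl
  rw [Int.fract, ← Int.natCast_floor_eq_floor hy, hfloor, Int.cast_natCast]
  constructor
  · intro h; have := key.2 (by linarith); omega
  · intro h; have := key.1 (by omega); linarith

lemma rademacher_of_mem_dyadicInterval {j k a : ℕ} (hj : j < k) {t : ℝ}
    (ht : t ∈ dyadicInterval k a) : rademacher j t = if a.testBit (k - 1 - j) then -1 else 1 := by
  obtain ⟨ht₀, rfl⟩ := mem_dyadicInterval.1 ht
  have hfloor : ⌊2 * (2 ^ j * t)⌋₊ = ⌊2 ^ k * t⌋₊ / 2 ^ (k - 1 - j) := by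
    have hk : (2 : ℝ) ^ k = 2 ^ (k - 1 - j) * (2 * 2 ^ j) := by
      rw [← pow_succ', ← pow_add]; congr 1; omega
    rw [← Nat.floor_div_natCast, Nat.cast_pow, Nat.cast_ofNat, hk]
    field_simp
  have hbit : Int.fract (2 ^ j * t) < 1 / 2 ↔ ¬ ⌊2 ^ k * t⌋₊.testBit (k - 1 - j) := by
    rw [fract_lt_half_iff (by positivity), hfloor, Nat.testBit_eq_decide_div_mod_eq]
    simp only [decide_eq_true_eq]
    omega
  by_cases h : ⌊2 ^ k * t⌋₊.testBit (k - 1 - j)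
  · rw [rademacher, if_neg (hbit.not.2 (not_not.2 h)), if_pos h]
  · rw [rademacher, if_pos (hbit.2 h), if_neg h]

lemma walsh_eq_prod_range {i M : ℕ} (hi : i < 2 ^ M) (t : ℝ) :
    walsh i t = ∏ j ∈ range M, if i.testBit j then rademacher j t else 1 := by
  have hextend : ∀ N L, i < 2 ^ N → N ≤ L →
      ∏ j ∈ range L, (if i.testBit j then rademacher j t else 1) =
        ∏ j ∈ range N, if i.testBit j then rademacher j t else 1 := by
    intro N L hN hNL
    refine (prod_subset (range_subset_range.2 hNL) fun j _ hj => ?_).symm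
    rw [Nat.testBit_lt_two_pow (hN.trans_le (Nat.pow_le_pow_right two_pos (by simpa using hj)))]
    rfl
  rw [walsh, ← hextend i (max i M) Nat.lt_two_pow_self (le_max_left _ _),
    hextend M (max i M) hi (le_max_right _ _)]

/-- On `J(k, a)` the binary digit of `t` read by `rademacher j` is bit `k - 1 - j` of `a`. -/
def walshValue (k i a : ℕ) : ℝ :=
  ∏ j ∈ range k, if i.testBit j && a.testBit (k - 1 - j) then -1 else 1

lemma walsh_of_mem_dyadicInterval {k i a : ℕ} (hi : i < 2 ^ k) {t : ℝ}
    (ht : t ∈ dyadicInterval k a) : walsh i t = walshValue k i a := by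
  rw [walsh_eq_prod_range hi, walshValue]
  refine prod_congr rfl fun j hj => ?_
  rw [rademacher_of_mem_dyadicInterval (mem_range.1 hj) ht]
  cases i.testBit j <;> cases a.testBit (k - 1 - j) <;> simp

lemma walshValue_mul_walshValue (k i a b : ℕ) :
    walshValue k i a * walshValue k i b = walshValue k i (a ^^^ b) := by
  rw [walshValue, walshValue, walshValue, ← prod_mul_distrib]
  refine prod_congr rfl fun j _ => ?_
  rw [Nat.testBit_xor]
  cases i.testBit j <;> cases a.testBit (k - 1 - j) <;> cases b.testBit (k - 1 - j) <;> simp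

lemma sum_range_two_pow_xor {M : Type*} [AddCommMonoid M] {k a : ℕ} (ha : a < 2 ^ k)
    (F : ℕ → M) : ∑ b ∈ range (2 ^ k), F (a ^^^ b) = ∑ b ∈ range (2 ^ k), F b := by
  refine sum_nbij' (a ^^^ ·) (a ^^^ ·) (fun b hb => ?_) (fun b hb => ?_) (fun b _ => ?_)
    (fun b _ => ?_) fun _ _ => rfl
  · simpa using Nat.xor_lt_two_pow ha (mem_range.1 hb)
  · simpa using Nat.xor_lt_two_pow ha (mem_range.1 hb)
  · simp
  · simp

def dirichletValue (n k a : ℕ) : ℝ := ∑ i ∈ range n, walshValue k i a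

lemma dirichlet_of_mem_dyadicInterval {n k a : ℕ} (hn : n ≤ 2 ^ k) {t : ℝ}
    (ht : t ∈ dyadicInterval k a) : dirichlet n t = dirichletValue n k a :=
  sum_congr rfl fun _ hi => walsh_of_mem_dyadicInterval ((mem_range.1 hi).trans_le hn) ht

lemma lebesgueConst_eq_sum {n k : ℕ} (hn : n ≤ 2 ^ k) :
    lebesgueConst n = (∑ a ∈ range (2 ^ k), |dirichletValue n k a|) / 2 ^ k :=
  integral_unitI_of_eqOn_dyadicInterval k fun _ _ _ ht => by
    rw [dirichlet_of_mem_dyadicInterval hn ht]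

lemma lebesgueConst_nonneg (n : ℕ) : 0 ≤ lebesgueConst n :=
  integral_nonneg fun _ => abs_nonneg _

lemma sq_norm_integral_le {α E : Type*} [MeasurableSpace α] [NormedAddCommGroup E]
    [NormedSpace ℝ E] {μ : Measure α} [IsFiniteMeasure μ] {f : α → E} (hf : MemLp f 2 μ) :
    ‖∫ x, f x ∂μ‖ ^ 2 ≤ μ.real Set.univ * ∫ x, ‖f x‖ ^ 2 ∂μ := by
  rcases eq_zero_or_neZero μ with rfl | hμ
  · simp
  have hμ_pos := measureReal_univ_pos (μ := μ)
  have hjensen := (even_two.convexOn_pow (𝕜 := ℝ)).map_average_le (continuous_pow 2).continuousOn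
    isClosed_univ (ae_of_all _ fun _ => trivial) (hf.integrable one_le_two).norm
    (hf.integrable_norm_pow two_ne_zero)
  simp only [average_eq, smul_eq_mul] at hjensen
  calc ‖∫ x, f x ∂μ‖ ^ 2 ≤ (∫ x, ‖f x‖ ∂μ) ^ 2 := by
        gcongr; exact norm_integral_le_integral_norm f
    _ = μ.real Set.univ ^ 2 * ((μ.real Set.univ)⁻¹ * ∫ x, ‖f x‖ ∂μ) ^ 2 := by
        field_simp
    _ ≤ μ.real Set.univ ^ 2 * ((μ.real Set.univ)⁻¹ * ∫ x, ‖f x‖ ^ 2 ∂μ) := by gcongr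
    _ = μ.real Set.univ * ∫ x, ‖f x‖ ^ 2 ∂μ := by field_simp

lemma sum_sq_sum_abs_xor_mul_le (k : ℕ) (d v : ℕ → ℝ) :
    ∑ a ∈ range (2 ^ k), (∑ b ∈ range (2 ^ k), |d (a ^^^ b)| * v b) ^ 2 ≤
      (∑ c ∈ range (2 ^ k), |d c|) ^ 2 * ∑ b ∈ range (2 ^ k), v b ^ 2 := by
  set S := ∑ c ∈ range (2 ^ k), |d c|
  have hrow : ∀ a ∈ range (2 ^ k), ∑ b ∈ range (2 ^ k), |d (a ^^^ b)| = S := fun a ha =>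
    sum_range_two_pow_xor (mem_range.1 ha) fun c => |d c|
  have hcol : ∀ b ∈ range (2 ^ k), ∑ a ∈ range (2 ^ k), |d (a ^^^ b)| = S := fun b hb => by
    simpa only [Nat.xor_comm] using hrow b hb
  calc ∑ a ∈ range (2 ^ k), (∑ b ∈ range (2 ^ k), |d (a ^^^ b)| * v b) ^ 2
      ≤ ∑ a ∈ range (2 ^ k), S * ∑ b ∈ range (2 ^ k), |d (a ^^^ b)| * v b ^ 2 := by
        refine sum_le_sum fun a ha => ?_
        rw [← hrow a ha]
        exact sum_sq_le_sum_mul_sum_of_sq_le_mul _ (fun _ _ => abs_nonneg _)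
          (fun _ _ => by positivity) fun _ _ => le_of_eq (by ring)
    _ = S * ∑ b ∈ range (2 ^ k), (∑ a ∈ range (2 ^ k), |d (a ^^^ b)|) * v b ^ 2 := by
        rw [← mul_sum, sum_comm]; simp only [sum_mul]
    _ = S ^ 2 * ∑ b ∈ range (2 ^ k), v b ^ 2 := by
        rw [sum_congr rfl fun b hb => by rw [hcol b hb], ← mul_sum, sq, mul_assoc]

section WalshSum

variable {X : Type*} [NormedAddCommGroup X] [NormedSpace ℝ X]

lemma walshCoeff_eq_sum {f : ℝ → X} (hf : Integrable f unitI) {k i : ℕ} (hi : i < 2 ^ k) :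
    walshCoeff f i =
      ∑ b ∈ range (2 ^ k), walshValue k i b • ∫ s in dyadicInterval k b, f s := by
  have hwalsh : ∀ b, Set.EqOn (fun s => walsh i s • f s) (fun s => walshValue k i b • f s)
      (dyadicInterval k b) := fun b s hs => by
    simp only [walsh_of_mem_dyadicInterval hi hs]
  rw [walshCoeff, integral_unitI_eq_sum k fun b hb =>
    IntegrableOn.congr_fun ((integrableOn_dyadicInterval hf hb).smul (walshValue k i b))
      (hwalsh b).symm (measurableSet_dyadicInterval k b)]
  refine sum_congr rfl fun b _ => ?_
  rw [setIntegral_congr_fun (measurableSet_dyadicInterval k b) (hwalsh b), integral_smul]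

lemma walshSum_of_mem_dyadicInterval {f : ℝ → X} (hf : Integrable f unitI) {n k a : ℕ}
    (hn : n ≤ 2 ^ k) {t : ℝ} (ht : t ∈ dyadicInterval k a) :
    walshSum n f t =
      ∑ b ∈ range (2 ^ k), dirichletValue n k (a ^^^ b) • ∫ s in dyadicInterval k b, f s := by
  have hterm : ∀ i ∈ range n, walsh i t • walshCoeff f i =
      ∑ b ∈ range (2 ^ k), (walshValue k i a * walshValue k i b) •
        ∫ s in dyadicInterval k b, f s := fun i hi => by
    have hik := (mem_range.1 hi).trans_le hn
    simp only [walsh_of_mem_dyadicInterval hik ht, walshCoeff_eq_sum hf hik, smul_sum, smul_smul]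
  simp only [walshSum, sum_congr rfl hterm, walshValue_mul_walshValue]
  rw [sum_comm]
  simp only [dirichletValue, sum_smul]

lemma sum_sq_norm_setIntegral_dyadicInterval_le {f : ℝ → X} (hf : MemL2 f) (k : ℕ) :
    ∑ b ∈ range (2 ^ k), ‖∫ s in dyadicInterval k b, f s‖ ^ 2 ≤
      (∫ s, ‖f s‖ ^ 2 ∂unitI) / 2 ^ k := by
  have hf2 : Integrable (fun s => ‖f s‖ ^ 2) unitI := hf.integrable_norm_pow two_ne_zero
  rw [integral_unitI_eq_sum k fun b hb => integrableOn_dyadicInterval hf2 hb, sum_div]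
  refine sum_le_sum fun b hb => ?_
  have hsub := dyadicInterval_subset_Icc (mem_range.1 hb)
  have : IsFiniteMeasure (volume.restrict (dyadicInterval k b)) :=
    isFiniteMeasure_restrict.2 (by simp [volume_dyadicInterval])
  calc ‖∫ s in dyadicInterval k b, f s‖ ^ 2
      ≤ volume.real (dyadicInterval k b) * ∫ s in dyadicInterval k b, ‖f s‖ ^ 2 := by
        simpa only [measureReal_restrict_apply_univ] using
          sq_norm_integral_le (hf.mono_measure (Measure.restrict_mono hsub le_rfl))
    _ = (∫ s in dyadicInterval k b, ‖f s‖ ^ 2) / 2 ^ k := by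
        rw [measureReal_dyadicInterval, inv_mul_eq_div]

lemma integral_sq_norm_walshSum_le {f : ℝ → X} (hf : MemL2 f) {n k : ℕ} (hn : n ≤ 2 ^ k) :
    ∫ t, ‖walshSum n f t‖ ^ 2 ∂unitI ≤ lebesgueConst n ^ 2 * ∫ t, ‖f t‖ ^ 2 ∂unitI := by
  set I := fun b => ∫ s in dyadicInterval k b, f s
  set d := dirichletValue n k
  have hstep : ∀ a < 2 ^ k, Set.EqOn (fun t => ‖walshSum n f t‖ ^ 2)
      (fun _ => ‖∑ b ∈ range (2 ^ k), d (a ^^^ b) • I b‖ ^ 2) (dyadicInterval k a) :=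
    fun a _ t ht => by
      simp only [walshSum_of_mem_dyadicInterval (hf.integrable one_le_two) hn ht, I, d]
  rw [integral_unitI_of_eqOn_dyadicInterval k hstep]
  calc (∑ a ∈ range (2 ^ k), ‖∑ b ∈ range (2 ^ k), d (a ^^^ b) • I b‖ ^ 2) / 2 ^ k
      ≤ (∑ a ∈ range (2 ^ k), (∑ b ∈ range (2 ^ k), |d (a ^^^ b)| * ‖I b‖) ^ 2) / 2 ^ k := by
        gcongr with a
        refine (norm_sum_le _ _).trans_eq (sum_congr rfl fun b _ => ?_)
        rw [norm_smul, Real.norm_eq_abs]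
    _ ≤ ((∑ c ∈ range (2 ^ k), |d c|) ^ 2 * ∑ b ∈ range (2 ^ k), ‖I b‖ ^ 2) / 2 ^ k := by
        gcongr
        exact sum_sq_sum_abs_xor_mul_le k d fun b => ‖I b‖
    _ ≤ ((∑ c ∈ range (2 ^ k), |d c|) ^ 2 * ((∫ t, ‖f t‖ ^ 2 ∂unitI) / 2 ^ k)) / 2 ^ k := by
        gcongr
        exact sum_sq_norm_setIntegral_dyadicInterval_le hf k
    _ = lebesgueConst n ^ 2 * ∫ t, ‖f t‖ ^ 2 ∂unitI := by
        rw [lebesgueConst_eq_sum hn]; ring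

lemma l2norm_walshSum_le {f : ℝ → X} (hf : MemL2 f) {n k : ℕ} (hn : n ≤ 2 ^ k) :
    l2norm (walshSum n f) ≤ lebesgueConst n * l2norm f := by
  rw [l2norm, l2norm, ← Real.sqrt_sq (lebesgueConst_nonneg n), ← Real.sqrt_mul (sq_nonneg _)]
  exact Real.sqrt_le_sqrt (integral_sq_norm_walshSum_le hf hn)

end WalshSum

def dyadicIndicator (k b : ℕ) : Lp ℝ 1 unitI :=
  indicatorConstLp 1 (measurableSet_dyadicInterval k b) (measure_ne_top unitI _) 1

lemma norm_dyadicIndicator {k b : ℕ} (hb : b < 2 ^ k) : ‖dyadicIndicator k b‖ = (2 ^ k)⁻¹ := by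
  rw [dyadicIndicator, norm_indicatorConstLp one_ne_zero ENNReal.one_ne_top,
    unitI_dyadicInterval hb]
  simp

lemma norm_sum_smul_dyadicIndicator (k : ℕ) (c : ℕ → ℝ) :
    ‖∑ b ∈ range (2 ^ k), c b • dyadicIndicator k b‖ = (∑ b ∈ range (2 ^ k), |c b|) / 2 ^ k := by
  have hcoe : ⇑(∑ b ∈ range (2 ^ k), c b • dyadicIndicator k b) =ᵐ[unitI]
      ∑ b ∈ range (2 ^ k), (dyadicInterval k b).indicator fun _ => c b := by
    refine (Lp.coeFn_finsetSum _ _).trans (eventuallyEq_sum fun b _ => ?_)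
    filter_upwards [Lp.coeFn_smul (c b) (dyadicIndicator k b),
      indicatorConstLp_coeFn (p := 1) (μ := unitI) (hs := measurableSet_dyadicInterval k b)
        (c := (1 : ℝ))] with t hsmul hind
    rw [hsmul, Pi.smul_apply, dyadicIndicator, hind, ← Set.indicator_const_smul_apply,
      smul_eq_mul, mul_one]
  rw [L1.norm_eq_integral_norm]
  refine (integral_congr_ae (hcoe.mono fun t ht => congrArg norm ht)).trans
    (integral_unitI_of_eqOn_dyadicInterval k fun a ha t ht => ?_)
  rw [Finset.sum_apply, sum_indicator_dyadicInterval_of_mem c ha ht, Real.norm_eq_abs]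

def dyadicTestFunction (k : ℕ) (t : ℝ) : Lp ℝ 1 unitI :=
  ∑ b ∈ range (2 ^ k), (dyadicInterval k b).indicator (fun _ => (2 ^ k : ℝ) • dyadicIndicator k b) t

lemma dyadicTestFunction_of_mem {k a : ℕ} (ha : a < 2 ^ k) {t : ℝ} (ht : t ∈ dyadicInterval k a) :
    dyadicTestFunction k t = (2 ^ k : ℝ) • dyadicIndicator k a :=
  sum_indicator_dyadicInterval_of_mem (fun b => (2 ^ k : ℝ) • dyadicIndicator k b) ha ht

lemma memL2_dyadicTestFunction (k : ℕ) : MemL2 (dyadicTestFunction k) :=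
  memLp_finsetSum _ fun b _ =>
    memLp_indicator_const 2 (measurableSet_dyadicInterval k b) _ (Or.inr (measure_ne_top _ _))

lemma l2norm_dyadicTestFunction (k : ℕ) : l2norm (dyadicTestFunction k) = 1 := by
  have hstep : ∀ a < 2 ^ k, Set.EqOn (fun t => ‖dyadicTestFunction k t‖ ^ 2) (fun _ => 1)
      (dyadicInterval k a) := fun a ha t ht => by
    simp [dyadicTestFunction_of_mem ha ht, norm_smul, norm_dyadicIndicator ha]
  rw [l2norm, integral_unitI_of_eqOn_dyadicInterval k hstep]
  simp

lemma setIntegral_dyadicTestFunction {k b : ℕ} (hb : b < 2 ^ k) :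
    ∫ s in dyadicInterval k b, dyadicTestFunction k s = dyadicIndicator k b := by
  rw [setIntegral_congr_fun (measurableSet_dyadicInterval k b)
      fun s hs => dyadicTestFunction_of_mem hb hs, setIntegral_const,
    measureReal_dyadicInterval, smul_smul, inv_mul_cancel₀ (by positivity), one_smul]

lemma l2norm_walshSum_dyadicTestFunction {n k : ℕ} (hn : n ≤ 2 ^ k) :
    l2norm (walshSum n (dyadicTestFunction k)) = lebesgueConst n := by
  have hint : Integrable (dyadicTestFunction k) unitI :=
    (memL2_dyadicTestFunction k).integrable one_le_two
  have hstep : ∀ a < 2 ^ k, Set.EqOn (fun t => ‖walshSum n (dyadicTestFunction k) t‖ ^ 2)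
      (fun _ => lebesgueConst n ^ 2) (dyadicInterval k a) := fun a ha t ht => by
    dsimp only
    rw [walshSum_of_mem_dyadicInterval hint hn ht,
      sum_congr rfl fun b hb => by rw [setIntegral_dyadicTestFunction (mem_range.1 hb)],
      norm_sum_smul_dyadicIndicator, sum_range_two_pow_xor ha fun c => |dirichletValue n k c|,
      ← lebesgueConst_eq_sum hn]
  rw [l2norm, integral_unitI_of_eqOn_dyadicInterval k hstep, sum_const, card_range, nsmul_eq_mul,
    Nat.cast_pow, Nat.cast_ofNat, mul_div_cancel_left₀ _ (by positivity),
    Real.sqrt_sq (lebesgueConst_nonneg n)]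

theorem walshDelta_L1_eq_lebesgueConst_general (n : ℕ) :
    walshDelta (ContinuousLinearMap.id ℝ (Lp ℝ 1 unitI)) n = lebesgueConst n := by
  have hn : n ≤ 2 ^ n := Nat.lt_two_pow_self.le
  have hmem : lebesgueConst n ∈ {c : ℝ | 0 ≤ c ∧ ∀ f : ℝ → Lp ℝ 1 unitI, MemL2 f →
      l2norm (fun t => ContinuousLinearMap.id ℝ _ (walshSum n f t)) ≤ c * l2norm f} :=
    ⟨lebesgueConst_nonneg n, fun _ hf => l2norm_walshSum_le hf hn⟩
  refine le_antisymm (csInf_le ⟨0, fun _ hc => hc.1⟩ hmem) (le_csInf ⟨_, hmem⟩ fun c hc => ?_)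
  simpa only [ContinuousLinearMap.id_apply, l2norm_walshSum_dyadicTestFunction hn,
    l2norm_dyadicTestFunction, mul_one] using hc.2 _ (memL2_dyadicTestFunction n)

/-- For every `n ≥ 1`, `δ(L_1[0,1] | W_n, W_n) = L_n`, the `n`-th Lebesgue constant
of the Walsh system. -/
theorem walshDelta_L1_eq_lebesgueConst (n : ℕ) (hn : 1 ≤ n) :
    walshDelta (ContinuousLinearMap.id ℝ (Lp ℝ 1 unitI)) n = lebesgueConst n :=
  walshDelta_L1_eq_lebesgueConst_general n

end
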